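/- For the farthest-first (greedy k-center) selection on a finite metric space, the covering radius after selecting k points is at most the minimal distance between any two of the first k+1 points selected; consequently, the greedy coreset of size k achieves covering radius at most twice the optimal k-center radius. -/
import Mathlib


open Finset

/-- Farthest-first (greedy k-center) on a finite metric space: the covering
radius of the first `k` selected points is at most the minimal pairwise
distance among the first `k+1` selected points, and consequently at most twice
the optimal k-center radius. -/
theorem farthest_first_two_approx
    {X : Type*} [MetricSpace X] [Fintype X] [Nonempty X]
    (k : ℕ) (hk : 1 ≤ k) (hcard : k + 1 ≤ Fintype.card X)
    (c : ℕ → X)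
    (hgreedy : ∀ i, ∀ hi : 1 ≤ i, ∀ x : X,
      (range i).inf' (nonempty_range_iff.mpr (by omega))
        (fun j => dist x (c j)) ≤
      (range i).inf' (nonempty_range_iff.mpr (by omega)) (fun j => dist (c i) (c j))) :
    (univ.sup' univ_nonempty fun x =>
        (range k).inf' (nonempty_range_iff.mpr (by omega)) fun j => dist x (c j)) ≤
      ((range (k + 1)).offDiag.inf'
          ⟨(0, 1), by simp [Finset.mem_offDiag]; omega⟩
          fun ij => dist (c ij.1) (c ij.2)) ∧
    ∀ C : Finset X, C.card = k → ∀ hC : C.Nonempty,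
      (univ.sup' univ_nonempty fun x =>
          (range k).inf' (nonempty_range_iff.mpr (by omega)) fun j => dist x (c j)) ≤
        2 * (univ.sup' univ_nonempty fun x => C.inf' hC fun p => dist x p) := by
  have hkne : 1 ≤ k := hk
  -- key auxiliary fact
  have aux : ∀ x : X, ∀ i j : ℕ, i < j → j ≤ k →
      (range k).inf' (nonempty_range_iff.mpr (by omega)) (fun l => dist x (c l)) ≤
        dist (c j) (c i) := by
    intro x i j hij hjk
    have hj1 : 1 ≤ j := by omega
    have h1 : (range k).inf' (nonempty_range_iff.mpr (by omega)) (fun l => dist x (c l)) ≤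
        (range j).inf' (nonempty_range_iff.mpr (by omega)) (fun l => dist x (c l)) := by
      exact Finset.inf'_mono _ (Finset.range_subset_range.mpr hjk) (nonempty_range_iff.mpr (by omega))
    have h2 := hgreedy j hj1 x
    have h3 : (range j).inf' (nonempty_range_iff.mpr (by omega))
        (fun l => dist (c j) (c l)) ≤ dist (c j) (c i) :=
      Finset.inf'_le _ (Finset.mem_range.mpr hij)
    linarith
  have part1 : (univ.sup' univ_nonempty fun x =>
        (range k).inf' (nonempty_range_iff.mpr (by omega)) fun j => dist x (c j)) ≤
      ((range (k + 1)).offDiag.inf'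
          ⟨(0, 1), by simp [Finset.mem_offDiag]; omega⟩
          fun ij => dist (c ij.1) (c ij.2)) := by
    apply Finset.sup'_le
    intro x _
    apply Finset.le_inf'
    rintro ⟨a, b⟩ hab
    rw [Finset.mem_offDiag] at hab
    obtain ⟨ha, hb, hne⟩ := hab
    simp only [Finset.mem_range] at ha hb
    rcases lt_or_gt_of_ne hne with h | h
    · have := aux x a b h (by omega)
      simpa [dist_comm] using this
    · exact aux x b a h (by omega)
  refine ⟨part1, ?_⟩
  intro C hCcard hC
  set r := univ.sup' univ_nonempty fun x => C.inf' hC fun p => dist x p with hr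
  -- each c i has a point in C within r
  have hnear : ∀ i : ℕ, ∃ p ∈ C, dist (c i) p ≤ r := by
    intro i
    obtain ⟨p, hp, hpe⟩ := Finset.exists_mem_eq_inf' hC (fun p => dist (c i) p)
    refine ⟨p, hp, ?_⟩
    rw [← hpe]
    exact Finset.le_sup' (fun x => C.inf' hC fun p => dist x p) (Finset.mem_univ (c i))
  choose f hfC hfr using hnear
  have hcardlt : C.card < (range (k + 1)).card := by
    simp [hCcard]
  obtain ⟨i, hi, j, hj, hne, hfij⟩ :=
    Finset.exists_ne_map_eq_of_card_lt_of_maps_to hcardlt (fun i _ => hfC i)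
  simp only [Finset.mem_range] at hi hj
  have hdij : dist (c i) (c j) ≤ 2 * r := by
    calc dist (c i) (c j) ≤ dist (c i) (f i) + dist (f j) (c j) := by
          rw [hfij]; exact dist_triangle _ _ _
      _ ≤ r + r := add_le_add (hfr i) (by rw [dist_comm]; exact hfr j)
      _ = 2 * r := by ring
  apply Finset.sup'_le
  intro x _
  rcases lt_or_gt_of_ne hne with h | h
  · calc (range k).inf' (nonempty_range_iff.mpr (by omega)) (fun l => dist x (c l)) ≤
        dist (c j) (c i) := aux x i j h (by omega)
      _ = dist (c i) (c j) := dist_comm _ _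
      _ ≤ 2 * r := hdij
  · exact le_trans (aux x j i h (by omega)) hdij
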